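/- arXiv:1202.0255 — 2 statements merged into one kernel-verified Lean document; each statement's English description precedes it below -/
import Mathlib

section
/- Let L and M be coHeyting semilattices and let u : L → M and v : M → L be monotone maps with u ⊣ v (u left adjoint to v). If u preserves the coHeyting subtraction (u(a ∖ b) = u(a) ∖ u(b)), then v satisfies the Frobenius identity v(p) ∨ q = v(p ∨ u(q)) for all p ∈ M, q ∈ L. -/
/-- A coHeyting semilattice: a poset with finite joins and a subtraction
operation `sdiff` left adjoint to join: `a ∖ b ≤ c ↔ a ≤ b ⊔ c`. -/
class CoHeytingSemilattice (α : Type*) extends SemilatticeSup α, OrderBot α where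
  sdiff : α → α → α
  sdiff_le_iff : ∀ a b c : α, sdiff a b ≤ c ↔ a ≤ b ⊔ c

/-- If u ⊣ v between coHeyting semilattices and u preserves subtraction, then
v satisfies the Frobenius identity: v p ⊔ q = v (p ⊔ u q). -/
theorem coheyting_frobenius {L M : Type*} [CoHeytingSemilattice L] [CoHeytingSemilattice M]
    (u : L → M) (v : M → L) (hu : Monotone u) (hv : Monotone v)
    (adj : ∀ (x : L) (y : M), u x ≤ y ↔ x ≤ v y)
    (hsd : ∀ a b : L, u (CoHeytingSemilattice.sdiff a b)
      = CoHeytingSemilattice.sdiff (u a) (u b)) :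
    ∀ (p : M) (q : L), v p ⊔ q = v (p ⊔ u q) := by
  intro p q
  apply le_antisymm
  · apply sup_le
    · exact hv le_sup_left
    · exact (adj q (p ⊔ u q)).mp le_sup_right
  · set x := v (p ⊔ u q) with hx
    have hcounit : u x ≤ p ⊔ u q := (adj x (p ⊔ u q)).mpr le_rfl
    have h1 : u (CoHeytingSemilattice.sdiff x q) ≤ p := by
      rw [hsd, CoHeytingSemilattice.sdiff_le_iff]
      exact hcounit.trans (sup_comm p (u q)).le
    have h2 : CoHeytingSemilattice.sdiff x q ≤ v p := (adj _ _).mp h1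
    have h3 : x ≤ q ⊔ v p := (CoHeytingSemilattice.sdiff_le_iff x q (v p)).mp h2
    exact h3.trans (sup_comm q (v p)).le
end

section
/- Let L, M be coHeyting semilattices and f*, g* : M → L monotone maps that preserve binary joins, and suppose f* = j* ∘ i* ∘ g* where i* : M → M', j* : M' → L are monotone with i* ⊣ j*, i* ∘ j* = id, and the Frobenius identity j*(p ∨ i*(q)) = j*(p) ∨ q holds (for p in M', q in L), and i* ∘ g* = i* ∘ f* in the evident sense. Then for all P ∈ M: f*(P) = g*(P) ∨ f*(⊥). -/
/-- If f* factors as j* ∘ i* ∘ g* through a coreflexive splitting i* ⊣ j* with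
i* ∘ j* = id and Frobenius, where f*, g* preserve binary joins and
i* ∘ g* = i* ∘ f*, then f* P = g* P ⊔ f* ⊥. -/
theorem pullback_along_smaller {L M M' : Type*}
    [CoHeytingSemilattice L] [CoHeytingSemilattice M] [CoHeytingSemilattice M']
    (f g : M → L) (i : L → M') (j : M' → L)
    (hf : Monotone f) (hg : Monotone g) (hi : Monotone i) (hj : Monotone j)
    (hfj : ∀ a b : M, f (a ⊔ b) = f a ⊔ f b)
    (hgj : ∀ a b : M, g (a ⊔ b) = g a ⊔ g b)
    (adj : ∀ (x : L) (y : M'), i x ≤ y ↔ x ≤ j y)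
    (hsec : ∀ y : M', i (j y) = y)
    (frob : ∀ (p : M') (q : L), j (p ⊔ i q) = j p ⊔ q)
    (hfact : ∀ P : M, f P = j (i (g P)))
    (hig : ∀ P : M, i (g P) = i (f P)) :
    ∀ P : M, f P = g P ⊔ f ⊥ := by
  intro P
  have key : i (f ⊥) ⊔ i (g P) = i (f P) := by
    apply le_antisymm
    · exact sup_le (hi (hf bot_le)) (le_of_eq (hig P))
    · rw [hig P]; exact le_sup_right
  calc f P = j (i (g P)) := hfact P
    _ = j (i (f P)) := by rw [hig]
    _ = j (i (f ⊥) ⊔ i (g P)) := by rw [key]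
    _ = j (i (f ⊥)) ⊔ g P := frob _ _
    _ = j (i (g ⊥)) ⊔ g P := by rw [hig]
    _ = f ⊥ ⊔ g P := by rw [← hfact]
    _ = g P ⊔ f ⊥ := sup_comm _ _
end
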